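/- arXiv:2604.25294 — 9 statements merged into one kernel-verified Lean document; each statement's English description precedes it below -/
import Mathlib

section
/- Let x and y be distinct binary sequences of length n, with d_H = d_H(x,y) ≥ 1, and let j_1 < j_2 < … < j_{d_H} be the positions where x and y differ. Then the single-deletion balls of x and y are disjoint if and only if both d_H(x_{[j_1+1, j_{d_H}]}, y_{[j_1, j_{d_H}-1]}) ≥ 1 and d_H(x_{[j_1, j_{d_H}-1]}, y_{[j_1+1, j_{d_H}]}) ≥ 1. -/
/-- Single-deletion ball of a list: all lists obtained by deleting one entry. -/
def delBall (x : List Bool) : Set (List Bool) := {z | ∃ i < x.length, z = x.eraseIdx i}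

/-- Hamming distance between two lists of equal length (compared entrywise). -/
def dHL (u v : List Bool) : ℕ :=
  ((Finset.range u.length).filter (fun i => u.getD i false ≠ v.getD i false)).card

lemma getD_eraseIdx' (l : List Bool) (i m : ℕ) :
    (l.eraseIdx i).getD m false = if m < i then l.getD m false else l.getD (m+1) false := by
  simp only [List.getD_eq_getElem?_getD, List.getElem?_eraseIdx]
  split <;> rfl

lemma getD_drop_take (l : List Bool) (a b k : ℕ) (hk : k < b) :
    ((l.drop a).take b).getD k false = l.getD (a+k) false := by
  simp only [List.getD_eq_getElem?_getD, List.getElem?_take, hk, if_true,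
    List.getElem?_drop]

lemma dHL_drop_take_eq_zero_iff (x y : List Bool) (a b c : ℕ) :
    dHL ((x.drop a).take c) ((y.drop b).take c) = 0 ↔
      ∀ k < min c (x.length - a), x.getD (a+k) false = y.getD (b+k) false := by
  unfold dHL
  rw [Finset.card_eq_zero, Finset.filter_eq_empty_iff]
  constructor
  · intro h k hk
    have hk' : k < ((x.drop a).take c).length := by
      simp [List.length_take, List.length_drop]; omega
    have := h (Finset.mem_range.2 hk')
    rw [getD_drop_take x a c k (by omega), getD_drop_take y b c k (by omega)] at this
    simpa using this
  · intro h k hk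
    rw [Finset.mem_range] at hk
    have hlen : ((x.drop a).take c).length = min c (x.length - a) := by
      simp [List.length_take, List.length_drop]
    rw [hlen] at hk
    rw [getD_drop_take x a c k (by omega), getD_drop_take y b c k (by omega)]
    simpa using h k hk

/-- Core lemma: if erasing `x` at `i` gives the same list as erasing `y` at `j` with
`i ≤ j`, then `x` shifted left by one agrees with `y` on `[p, q)`. -/
lemma core (n : ℕ) (x y : List Bool) (hx : x.length = n) (hy : y.length = n)
    (p q : ℕ)
    (hp : x.getD p false ≠ y.getD p false)
    (hq : x.getD q false ≠ y.getD q false)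
    (i j : ℕ) (hij : i ≤ j)
    (heq : x.eraseIdx i = y.eraseIdx j) :
    ∀ k, p ≤ k → k < q → x.getD (k+1) false = y.getD k false := by
  have hAll : ∀ m, (if m < i then x.getD m false else x.getD (m+1) false)
      = (if m < j then y.getD m false else y.getD (m+1) false) := by
    intro m
    rw [← getD_eraseIdx' x i m, ← getD_eraseIdx' y j m, heq]
  have hip : i ≤ p := by
    by_contra h
    push_neg at h
    have := hAll p
    rw [if_pos h, if_pos (lt_of_lt_of_le h hij)] at this
    exact hp this
  have hqj : q ≤ j := by
    by_contra h
    push_neg at h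
    have hq1 : 1 ≤ q := by omega
    have := hAll (q-1)
    rw [if_neg (by omega), if_neg (by omega)] at this
    rw [Nat.sub_add_cancel hq1] at this
    exact hq this
  intro k hpk hkq
  have := hAll k
  rwa [if_neg (by omega), if_pos (by omega)] at this

/-- For distinct `x, y` of length `n` with smallest disagreement (0-indexed) position `p`
and largest disagreement position `q`, the single-deletion balls are disjoint iff
`d_H(x_{[p+2,q+1]}, y_{[p+1,q]}) ≥ 1` and `d_H(x_{[p+1,q]}, y_{[p+2,q+1]}) ≥ 1`
(in 1-indexed notation, `d_H(x_{[j₁+1,j_d]}, y_{[j₁,j_d−1]}) ≥ 1` and symmetrically). -/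
theorem stmt3 (n : ℕ) (x y : List Bool) (hx : x.length = n) (hy : y.length = n)
    (hne : x ≠ y) (p q : ℕ)
    (hp : x.getD p false ≠ y.getD p false)
    (hq : x.getD q false ≠ y.getD q false)
    (hmin : ∀ k, x.getD k false ≠ y.getD k false → p ≤ k)
    (hmax : ∀ k, k < n → x.getD k false ≠ y.getD k false → k ≤ q) :
    (delBall x ∩ delBall y = ∅) ↔
      (1 ≤ dHL ((x.drop (p + 1)).take (q - p)) ((y.drop p).take (q - p)) ∧
       1 ≤ dHL ((x.drop p).take (q - p)) ((y.drop (p + 1)).take (q - p))) := by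
  have hpn : p < n := by
    by_contra h
    push_neg at h
    rw [List.getD_eq_default x false (by omega), List.getD_eq_default y false (by omega)] at hp
    exact hp rfl
  have hqn : q < n := by
    by_contra h
    push_neg at h
    rw [List.getD_eq_default x false (by omega), List.getD_eq_default y false (by omega)] at hq
    exact hq rfl
  have hpq : p ≤ q := hmin q hq
  have hagree_lt : ∀ k, k < p → x.getD k false = y.getD k false := by
    intro k hk
    by_contra h
    exact absurd (hmin k h) (by omega)
  have hagree_gt : ∀ k, q < k → x.getD k false = y.getD k false := by
    intro k hk
    by_cases hkn : k < n
    · by_contra h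
      exact absurd (hmax k hkn h) (by omega)
    · rw [List.getD_eq_default x false (by omega), List.getD_eq_default y false (by omega)]
  -- characterization of dHL = 0 for both pairs
  have hchar1 : dHL ((x.drop (p + 1)).take (q - p)) ((y.drop p).take (q - p)) = 0 ↔
      ∀ k, p ≤ k → k < q → x.getD (k+1) false = y.getD k false := by
    rw [dHL_drop_take_eq_zero_iff]
    have hmin' : min (q - p) (x.length - (p+1)) = q - p := by omega
    rw [hmin']
    constructor
    · intro h k hpk hkq
      have := h (k - p) (by omega)
      rwa [show p + 1 + (k - p) = k + 1 by omega, show p + (k - p) = k by omega] at this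
    · intro h k hk
      have := h (p + k) (by omega) (by omega)
      rwa [show p + k + 1 = p + 1 + k by omega] at this
  have hchar2 : dHL ((x.drop p).take (q - p)) ((y.drop (p + 1)).take (q - p)) = 0 ↔
      ∀ k, p ≤ k → k < q → x.getD k false = y.getD (k+1) false := by
    rw [dHL_drop_take_eq_zero_iff]
    have hmin' : min (q - p) (x.length - p) = q - p := by omega
    rw [hmin']
    constructor
    · intro h k hpk hkq
      have := h (k - p) (by omega)
      rwa [show p + (k - p) = k by omega, show p + 1 + (k - p) = k + 1 by omega] at this
    · intro h k hk
      have := h (p + k) (by omega) (by omega)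
      rwa [show p + k + 1 = p + 1 + k by omega] at this
  -- main equivalence via nonemptiness of intersection
  have key : (∃ z, z ∈ delBall x ∩ delBall y) ↔
      (dHL ((x.drop (p + 1)).take (q - p)) ((y.drop p).take (q - p)) = 0 ∨
       dHL ((x.drop p).take (q - p)) ((y.drop (p + 1)).take (q - p)) = 0) := by
    constructor
    · rintro ⟨z, ⟨i, hi, rfl⟩, ⟨j, hj, hzy⟩⟩
      rcases le_total i j with hij | hij
      · left
        rw [hchar1]
        exact core n x y hx hy p q hp hq i j hij hzy
      · right
        rw [hchar2]
        intro k hpk hkq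
        exact (core n y x hy hx p q (Ne.symm hp) (Ne.symm hq) j i hij hzy.symm k hpk hkq).symm
    · intro h
      rcases h with h | h
      · rw [hchar1] at h
        refine ⟨x.eraseIdx p, ⟨p, by omega, rfl⟩, ⟨q, by omega, ?_⟩⟩
        apply List.ext_getElem
        · rw [List.length_eraseIdx, List.length_eraseIdx]
          simp [hx, hy, hpn, hqn]
        · intro m h1 h2
          rw [← List.getD_eq_getElem _ false h1, ← List.getD_eq_getElem _ false h2,
            getD_eraseIdx' x p m, getD_eraseIdx' y q m]
          split_ifs with h3 h4 h4
          · exact hagree_lt m h3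
          · omega
          · exact h m (by omega) h4
          · exact hagree_gt (m+1) (by omega)
      · rw [hchar2] at h
        refine ⟨x.eraseIdx q, ⟨q, by omega, rfl⟩, ⟨p, by omega, ?_⟩⟩
        apply List.ext_getElem
        · rw [List.length_eraseIdx, List.length_eraseIdx]
          simp [hx, hy, hpn, hqn]
        · intro m h1 h2
          rw [← List.getD_eq_getElem _ false h1, ← List.getD_eq_getElem _ false h2,
            getD_eraseIdx' x q m, getD_eraseIdx' y p m]
          split_ifs with h3 h4 h4
          · exact hagree_lt m (by omega)
          · exact (h m (by omega) (by omega)).symm ▸ (h m (by omega) (by omega))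
          · omega
          · exact hagree_gt (m+1) (by omega)
  rw [Set.eq_empty_iff_forall_notMem]
  constructor
  · intro h
    have : ¬ (∃ z, z ∈ delBall x ∩ delBall y) := fun ⟨z, hz⟩ => h z hz
    rw [key] at this
    push_neg at this
    exact ⟨by omega, by omega⟩
  · rintro ⟨h1, h2⟩ z hz
    have : ∃ z, z ∈ delBall x ∩ delBall y := ⟨z, hz⟩
    rw [key] at this
    omega
end

section
/- Let α, β ∈ {0,1} and let w be a binary sequence of any length (possibly empty). Define d_1 = d_H(wβ, (1-α)w) and d_2 = d_H(αw, w(1-β)), where concatenation is used and both compared sequences have length |w|+1. Then α = β if and only if d_1 and d_2 are both odd, and α ≠ β if and only if d_1 and d_2 are both even. -/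
/-- xor-fold of a list. -/
def px (l : List Bool) : Bool := l.foldr xor false

lemma px_cons (a : Bool) (l : List Bool) : px (a :: l) = xor a (px l) := rfl

lemma foldr_xor (c : Bool) (l : List Bool) : l.foldr xor c = xor (px l) c := by
  induction l with
  | nil => simp [px]
  | cons a l ih => simp [px_cons, List.foldr_cons, ih, Bool.xor_assoc]

lemma px_append (l m : List Bool) : px (l ++ m) = xor (px l) (px m) := by
  induction l with
  | nil => simp [px]
  | cons a l ih => simp only [List.cons_append, px_cons, ih, Bool.xor_assoc]

lemma px_nil : px [] = false := rfl

lemma px_singleton (b : Bool) : px [b] = b := by simp [px]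

lemma dHL_cons (a b : Bool) (u v : List Bool) :
    dHL (a :: u) (b :: v) = (if a = b then 0 else 1) + dHL u v := by
  unfold dHL
  rw [Finset.card_filter, Finset.card_filter]
  rw [show (a :: u).length = u.length + 1 from rfl, Finset.sum_range_succ']
  simp only [List.getD_cons_succ, List.getD_cons_zero]
  rw [add_comm]
  congr 1
  by_cases h : a = b <;> simp [h]

lemma dHL_odd (u v : List Bool) (h : u.length = v.length) :
    Odd (dHL u v) ↔ px u ≠ px v := by
  induction u generalizing v with
  | nil =>
    cases v with
    | nil => simp [dHL, px, Nat.odd_iff]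
    | cons b v => simp at h
  | cons a u ih =>
    cases v with
    | nil => simp at h
    | cons b v =>
      simp only [List.length_cons, Nat.add_right_cancel_iff] at h
      rw [dHL_cons, Nat.odd_add, ← Nat.not_odd_iff_even, ih v h, px_cons, px_cons]
      by_cases hab : a = b
      · subst hab
        cases hu : px u <;> cases hv : px v <;> simp [Nat.odd_iff]
      · rcases Bool.eq_not_of_ne hab with rfl
        cases b <;> cases hu : px u <;> cases hv : px v <;>
          simp [hu, hv, Nat.odd_iff]

/-- For `α, β ∈ {0,1}` and any binary sequence `w`, letting
`d₁ = d_H(wβ, ᾱw)` and `d₂ = d_H(αw, wβ̄)`: `α = β` iff both `d₁, d₂` are odd, and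
`α ≠ β` iff both `d₁, d₂` are even. -/
theorem stmt6 (α β : Bool) (w : List Bool) :
    ((α = β) ↔ (Odd (dHL (w ++ [β]) ((!α) :: w)) ∧ Odd (dHL (α :: w) (w ++ [!β])))) ∧
    ((α ≠ β) ↔ (Even (dHL (w ++ [β]) ((!α) :: w)) ∧ Even (dHL (α :: w) (w ++ [!β])))) := by
  have h1 : Odd (dHL (w ++ [β]) ((!α) :: w)) ↔ (α = β) := by
    rw [dHL_odd _ _ (by simp)]
    cases α <;> cases β <;> cases h : px w <;>
      simp [px_append, px_cons, px_singleton, px_nil, h]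
  have h2 : Odd (dHL (α :: w) (w ++ [!β])) ↔ (α = β) := by
    rw [dHL_odd _ _ (by simp)]
    cases α <;> cases β <;> cases h : px w <;>
      simp [px_append, px_cons, px_singleton, px_nil, h]
  constructor
  · rw [h1, h2]; tauto
  · rw [← Nat.not_odd_iff_even, ← Nat.not_odd_iff_even, h1, h2]; tauto
end

section
/- Let α, β ∈ {0,1}, let w be a binary sequence, and set d_1 = d_H(wβ, (1-α)w), d_2 = d_H(αw, w(1-β)). Then: (i) if α = β, then d_1 = d_2 = 1 if and only if r(w) ≤ 1, and d_1 ≥ 3 and d_2 ≥ 3 if and only if r(w) ≥ 3, and {d_1, d_2} = {1, 3} if and only if r(w) = 2; (ii) if α ≠ β, then d_1 = d_2 = 0 if and only if r(w) = 0, d_1 = d_2 = 2 if and only if r(w) = 2, d_1 ≥ 4 and d_2 ≥ 4 if and only if r(w) ≥ 4, {d_1, d_2} = {0, 2} with d_1 ≠ d_2 if and only if r(w) = 1, and {d_1, d_2} = {2, 4} with d_1 ≠ d_2 if and only if r(w) = 3. -/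
/-- The (0-indexed) starting positions of the runs of `x`; its length is the number of
runs `r(x)` (with `r = 0` for the empty sequence). -/
def runStarts (x : List Bool) : List ℕ :=
  (List.range x.length).filter (fun k => decide (k = 0 ∨ x.getD (k - 1) false ≠ x.getD k false))

/-- number of sign changes in `a :: w` -/
def D : List Bool → Bool → ℕ
  | [], _ => 0
  | b :: t, a => (if a = b then 0 else 1) + D t b

lemma dHL_eq_D1 (w : List Bool) (b c : Bool) :
    dHL (w ++ [b]) (c :: w) = D (w ++ [b]) c := by
  induction w generalizing b c with
  | nil => cases b <;> cases c <;> decide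
  | cons a t ih =>
    rw [List.cons_append, dHL_cons]
    simp only [D, ih]
    congr 1
    cases a <;> cases c <;> simp

lemma dHL_eq_D2 (w : List Bool) (a c : Bool) :
    dHL (a :: w) (w ++ [c]) = D (w ++ [c]) a := by
  induction w generalizing a c with
  | nil => cases a <;> cases c <;> decide
  | cons b t ih =>
    rw [List.cons_append, dHL_cons]
    simp only [D, ih]

lemma D_append (w : List Bool) (x c : Bool) :
    D (w ++ [x]) c = D w c + (if w.getLastD c = x then 0 else 1) := by
  induction w generalizing c with
  | nil => simp [D]
  | cons b t ih =>
    rw [List.cons_append]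
    show (if c = b then 0 else 1) + D (t ++ [x]) b = _
    rw [ih, List.getLastD_cons]
    show _ = (if c = b then 0 else 1) + D t b + _
    ring

lemma parity_D (t : List Bool) (a : Bool) :
    t.getLastD a = a ↔ Even (D t a) := by
  induction t generalizing a with
  | nil => simp [D]
  | cons b s ih =>
    have ih' : ∀ c, s.getLast?.getD c = c ↔ Even (D s c) := by
      intro c; rw [← List.getLastD_eq_getLast?]; exact ih c
    rw [List.getLastD_cons, List.getLastD_eq_getLast?]
    show _ ↔ Even ((if a = b then 0 else 1) + D s b)
    by_cases h : a = b
    · subst h; rw [if_pos rfl, zero_add]; exact ih' a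
    · rw [if_neg h, add_comm, Nat.even_add_one, ← ih' b]
      have hab : a = !b := by cases a <;> cases b <;> simp_all
      subst hab
      cases hv : s.getLast?.getD b <;> cases b <;> simp_all

lemma runStarts_aux (w : List Bool) (a : Bool) :
    (List.range w.length).countP
      (fun i => decide ((a :: w).getD i false ≠ w.getD i false)) = D w a := by
  induction w generalizing a with
  | nil => rfl
  | cons b t ih =>
    rw [List.length_cons, List.range_succ_eq_map, List.countP_cons, List.countP_map]
    have hfun : ((fun i => decide ((a :: b :: t).getD i false ≠ (b :: t).getD i false)) ∘ Nat.succ)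
        = fun i => decide ((b :: t).getD i false ≠ t.getD i false) := by
      funext i; simp [Function.comp]
    rw [hfun, ih b]
    show _ = (if a = b then 0 else 1) + D t b
    cases a <;> cases b <;> simp [add_comm]

lemma runStarts_nil : (runStarts []).length = 0 := rfl

lemma runStarts_cons (a : Bool) (t : List Bool) :
    (runStarts (a :: t)).length = 1 + D t a := by
  unfold runStarts
  rw [← List.countP_eq_length_filter, List.length_cons, List.range_succ_eq_map,
    List.countP_cons, List.countP_map]
  have hfun : ((fun k => decide (k = 0 ∨ (a :: t).getD (k - 1) false ≠ (a :: t).getD k false)) ∘ Nat.succ)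
      = fun i => decide ((a :: t).getD i false ≠ t.getD i false) := by
    funext i; simp [Function.comp]
  rw [hfun, runStarts_aux t a]
  simp [add_comm]


/-- Refined relations between `d₁ = d_H(wβ, ᾱw)`, `d₂ = d_H(αw, wβ̄)` and the number of
runs `r(w)`, in the two cases `α = β` and `α ≠ β`. -/
theorem stmt7 (α β : Bool) (w : List Bool) (d1 d2 : ℕ)
    (hd1 : d1 = dHL (w ++ [β]) ((!α) :: w))
    (hd2 : d2 = dHL (α :: w) (w ++ [!β])) :
    (α = β →
      ((d1 = 1 ∧ d2 = 1) ↔ (runStarts w).length ≤ 1) ∧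
      ((3 ≤ d1 ∧ 3 ≤ d2) ↔ 3 ≤ (runStarts w).length) ∧
      ((d1 ≠ d2 ∧ ({d1, d2} : Set ℕ) = {1, 3}) ↔ (runStarts w).length = 2)) ∧
    (α ≠ β →
      ((d1 = 0 ∧ d2 = 0) ↔ (runStarts w).length = 0) ∧
      ((d1 = 2 ∧ d2 = 2) ↔ (runStarts w).length = 2) ∧
      ((4 ≤ d1 ∧ 4 ≤ d2) ↔ 4 ≤ (runStarts w).length) ∧
      ((d1 ≠ d2 ∧ ({d1, d2} : Set ℕ) = {0, 2}) ↔ (runStarts w).length = 1) ∧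
      ((d1 ≠ d2 ∧ ({d1, d2} : Set ℕ) = {2, 4}) ↔ (runStarts w).length = 3)) := by
  subst hd1 hd2
  cases w with
  | nil =>
    rw [runStarts_nil]
    cases α <;> cases β <;>
      simp_all [dHL_eq_D1, dHL_eq_D2, D, Set.pair_eq_pair_iff] <;> decide
  | cons a t =>
    have hd1' : dHL ((a :: t) ++ [β]) ((!α) :: a :: t)
        = (if (!α) = a then 0 else 1) + D t a + (if t.getLastD a = β then 0 else 1) := by
      rw [dHL_eq_D1, D_append, List.getLastD_cons]
      rfl
    have hd2' : dHL (α :: a :: t) ((a :: t) ++ [!β])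
        = (if α = a then 0 else 1) + D t a + (if t.getLastD a = (!β) then 0 else 1) := by
      rw [dHL_eq_D2, D_append, List.getLastD_cons]
      rfl
    have hpar := parity_D t a
    rw [Nat.even_iff] at hpar
    rw [hd1', hd2', runStarts_cons]
    generalize hL : t.getLastD a = L at hpar ⊢
    generalize hn : D t a = n at hpar ⊢
    cases α <;> cases β <;> cases a <;> cases L <;>
      simp_all [Set.pair_eq_pair_iff] <;> omega
end

section
/- Fix n ≥ 1, s ∈ [0, 2n-1], and define the Varshamov–Tenengolts code VT_s(n) = {x ∈ {0,1}^n : Σ_{i=1}^n i·x_i ≡ s (mod 2n)}. Then for any two distinct sequences x, y ∈ VT_s(n), the single-deletion balls D(x) and D(y) are disjoint, and the single-substitution balls S(x) and S(y) are disjoint. -/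
/-- Single-substitution ball of a list. -/
def subBallL (x : List Bool) : Set (List Bool) := {z | z.length = x.length ∧ dHL x z ≤ 1}

/-- First-order VT syndrome `Σ_{i=1}^n i·x_i` (lists being 0-indexed). -/
def vtSyn (x : List Bool) : ℕ :=
  (Finset.range x.length).sum (fun i => (i + 1) * (if x.getD i false then 1 else 0))


open Finset


def wgt (z : List Bool) (i : ℕ) : ℕ :=
  ((Finset.Ico i z.length).filter (fun k => z.getD k false)).card

lemma syn_erase (x : List Bool) (i : ℕ) (hi : i < x.length) :
    vtSyn x = vtSyn (x.eraseIdx i)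
      + ((i + 1) * (if x.getD i false then 1 else 0) + wgt (x.eraseIdx i) i) := by
  have hzl : (x.eraseIdx i).length = x.length - 1 := by
    simp [List.length_eraseIdx, hi]
  set n := x.length with hn
  set z := x.eraseIdx i with hzdef
  have hzx_lt : ∀ k, k < i → z.getD k false = x.getD k false := by
    intro k hk
    have hk1 : k < z.length := by omega
    have hk2 : k < n := by omega
    rw [List.getD_eq_getElem _ _ hk1, List.getD_eq_getElem _ _ hk2]
    simp [hzdef, List.getElem_eraseIdx, hk]
  have hzx_ge : ∀ k, i ≤ k → k < n - 1 → z.getD k false = x.getD (k+1) false := by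
    intro k hk hk'
    have hk1 : k < z.length := by omega
    have hk2 : k + 1 < n := by omega
    rw [List.getD_eq_getElem _ _ hk1, List.getD_eq_getElem _ _ hk2]
    simp [hzdef, List.getElem_eraseIdx, Nat.not_lt.mpr hk]
  have h1 : vtSyn x = ∑ k ∈ range i, (k + 1) * (if x.getD k false then 1 else 0)
      + ((i + 1) * (if x.getD i false then 1 else 0)
        + ∑ k ∈ Ico (i+1) n, (k + 1) * (if x.getD k false then 1 else 0)) := by
    rw [vtSyn, range_eq_Ico,
      ← Finset.sum_Ico_consecutive _ (Nat.zero_le i) (le_of_lt hi),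
      Finset.sum_eq_sum_Ico_succ_bot hi, ← range_eq_Ico]
  have h3 : ∑ k ∈ Ico (i+1) n, (k + 1) * (if x.getD k false then 1 else 0)
      = ∑ k ∈ Ico i (n-1), (k + 2) * (if z.getD k false then 1 else 0) := by
    rw [Finset.sum_Ico_eq_sum_range, Finset.sum_Ico_eq_sum_range]
    have he : n - (i+1) = n - 1 - i := by omega
    rw [he]
    apply Finset.sum_congr rfl
    intro k hk
    simp only [Finset.mem_range] at hk
    rw [hzx_ge (i + k) (by omega) (by omega)]
    have : i + 1 + k = i + k + 1 := by omega
    rw [this]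

  have h4 : ∑ k ∈ Ico i (n-1), (k + 2) * (if z.getD k false then 1 else 0)
      = ∑ k ∈ Ico i (n-1), (k + 1) * (if z.getD k false then 1 else 0)
        + ∑ k ∈ Ico i (n-1), (if z.getD k false then 1 else 0) := by
    rw [← Finset.sum_add_distrib]
    apply Finset.sum_congr rfl
    intro k _
    ring
  have h5 : ∑ k ∈ Ico i (n-1), (if z.getD k false then 1 else 0) = wgt z i := by
    rw [wgt, hzl]
    simp [Finset.sum_boole]
  have h6 : vtSyn z = ∑ k ∈ range i, (k + 1) * (if z.getD k false then 1 else 0)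
      + ∑ k ∈ Ico i (n-1), (k + 1) * (if z.getD k false then 1 else 0) := by
    rw [vtSyn, hzl, range_eq_Ico,
      ← Finset.sum_Ico_consecutive _ (Nat.zero_le i) (by omega : i ≤ n - 1),
      ← range_eq_Ico]
  have h7 : ∑ k ∈ range i, (k + 1) * (if x.getD k false then 1 else 0)
      = ∑ k ∈ range i, (k + 1) * (if z.getD k false then 1 else 0) := by
    apply Finset.sum_congr rfl
    intro k hk
    simp only [Finset.mem_range] at hk
    rw [hzx_lt k hk]
  omega

lemma syn_erase_bound (x : List Bool) (i : ℕ) (hi : i < x.length) :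
    (i + 1) * (if x.getD i false then 1 else 0) + wgt (x.eraseIdx i) i ≤ x.length := by
  have hzl : (x.eraseIdx i).length = x.length - 1 := by
    simp [List.length_eraseIdx, hi]
  have hw : wgt (x.eraseIdx i) i ≤ x.length - 1 - i := by
    rw [wgt, hzl]
    have h2 := Finset.card_filter_le (Finset.Ico i (x.eraseIdx i).length)
      (fun k => (x.eraseIdx i).getD k false)
    rw [hzl, Nat.card_Ico] at h2
    exact h2
  by_cases hb : x.getD i false
  · rw [if_pos hb]; omega
  · rw [if_neg hb]; omega

lemma ext_erase (x y : List Bool) (i j : ℕ) (hij : i ≤ j) (hi : i < x.length)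
    (hj : j < y.length) (hlen : x.length = y.length)
    (hz : x.eraseIdx i = y.eraseIdx j) (b : Bool)
    (hbx : x.getD i false = b) (hby : y.getD j false = b)
    (hmid : ∀ k, i ≤ k → k < j → (x.eraseIdx i).getD k false = b) : x = y := by
  have hzl : (x.eraseIdx i).length = x.length - 1 := by
    simp [List.length_eraseIdx, hi]
  have hxe : ∀ k, k < i → x.getD k false = (x.eraseIdx i).getD k false := by
    intro k hk
    rw [List.getD_eq_getElem _ _ (by omega : k < x.length),
      List.getD_eq_getElem _ _ (by omega : k < (x.eraseIdx i).length),
      List.getElem_eraseIdx, dif_pos hk]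
  have hxe2 : ∀ k, i ≤ k → k + 1 < x.length →
      x.getD (k+1) false = (x.eraseIdx i).getD k false := by
    intro k hk hk2
    rw [List.getD_eq_getElem _ _ hk2,
      List.getD_eq_getElem _ _ (by omega : k < (x.eraseIdx i).length),
      List.getElem_eraseIdx, dif_neg (by omega)]
  have hye : ∀ k, k < j → y.getD k false = (x.eraseIdx i).getD k false := by
    intro k hk
    rw [hz, List.getD_eq_getElem _ _ (by omega : k < y.length),
      List.getD_eq_getElem _ _ (by rw [List.length_eraseIdx, if_pos hj]; omega :
        k < (y.eraseIdx j).length),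
      List.getElem_eraseIdx, dif_pos hk]
  have hye2 : ∀ k, j ≤ k → k + 1 < x.length →
      y.getD (k+1) false = (x.eraseIdx i).getD k false := by
    intro k hk hk2
    rw [hz, List.getD_eq_getElem _ _ (by omega : k + 1 < y.length),
      List.getD_eq_getElem _ _ (by rw [List.length_eraseIdx, if_pos hj]; omega :
        k < (y.eraseIdx j).length),
      List.getElem_eraseIdx, dif_neg (by omega)]
  apply List.ext_getElem hlen
  intro k hk1 hk2
  rw [← List.getD_eq_getElem x false hk1, ← List.getD_eq_getElem y false hk2]
  rcases lt_trichotomy k i with h | h | h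
  · rw [hxe k h, hye k (by omega)]
  · subst h
    rcases eq_or_lt_of_le hij with rfl | hlt
    · rw [hbx, hby]
    · rw [hbx, hye k hlt, hmid k le_rfl hlt]
  · have e1 : x.getD k false = (x.eraseIdx i).getD (k-1) false := by
      have h2 := hxe2 (k-1) (by omega) (by omega)
      rwa [Nat.sub_add_cancel (by omega : 1 ≤ k)] at h2
    rcases lt_trichotomy k j with h2 | h2 | h2
    · rw [e1, hmid (k-1) (by omega) (by omega), hye k h2, hmid k (by omega) h2]
    · subst h2
      rw [e1, hmid (k-1) (by omega) (by omega), hby]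
    · have e2 : y.getD k false = (x.eraseIdx i).getD (k-1) false := by
        have h3 := hye2 (k-1) (by omega) (by omega)
        rwa [Nat.sub_add_cancel (by omega : 1 ≤ k)] at h3
      rw [e1, e2]

lemma del_eq (x y : List Bool) (i j : ℕ) (hij : i ≤ j) (hi : i < x.length)
    (hj : j < y.length) (hlen : x.length = y.length)
    (hz : x.eraseIdx i = y.eraseIdx j)
    (hd : (i + 1) * (if x.getD i false then 1 else 0) + wgt (x.eraseIdx i) i
        = (j + 1) * (if y.getD j false then 1 else 0) + wgt (y.eraseIdx j) j) :
    x = y := by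
  have hzl : (x.eraseIdx i).length = x.length - 1 := by
    simp [List.length_eraseIdx, hi]
  have hj' : j ≤ x.length - 1 := by omega
  -- split the weight at j
  have hsplit : wgt (x.eraseIdx i) i
      = ((Finset.Ico i j).filter (fun k => (x.eraseIdx i).getD k false)).card
        + wgt (x.eraseIdx i) j := by
    rw [wgt, wgt, ← Finset.card_union_of_disjoint, ← Finset.filter_union,
      Finset.Ico_union_Ico_eq_Ico hij (by rw [hzl]; exact hj')]
    exact Finset.disjoint_filter_filter (Finset.Ico_disjoint_Ico_consecutive i j _)
  have hwy : wgt (y.eraseIdx j) j = wgt (x.eraseIdx i) j := by rw [hz]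
  rw [hwy] at hd
  set c := ((Finset.Ico i j).filter (fun k => (x.eraseIdx i).getD k false)).card with hc
  have hcle : c ≤ j - i := by
    have := Finset.card_filter_le (Finset.Ico i j) (fun k => (x.eraseIdx i).getD k false)
    rwa [Nat.card_Ico] at this
  by_cases hbx : x.getD i false <;> by_cases hby : y.getD j false
  · -- both true : c = j - i, middle all true
    rw [if_pos hbx, if_pos hby] at hd
    have hceq : c = j - i := by omega
    have hfull : (Finset.Ico i j).filter (fun k => (x.eraseIdx i).getD k false)
        = Finset.Ico i j := by
      apply Finset.eq_of_subset_of_card_le (Finset.filter_subset _ _)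
      rw [Nat.card_Ico, ← hceq]
    exact ext_erase x y i j hij hi hj hlen hz true hbx hby (by
      intro k h1 h2
      have hk : k ∈ (Finset.Ico i j).filter (fun k => (x.eraseIdx i).getD k false) := by
        rw [hfull]; exact Finset.mem_Ico.mpr ⟨h1, h2⟩
      simpa using (Finset.mem_filter.mp hk).2)
  · rw [if_pos hbx, if_neg hby] at hd; omega
  · rw [if_neg hbx, if_pos hby] at hd; omega
  · -- both false : c = 0, middle all false
    rw [if_neg hbx, if_neg hby] at hd
    have hceq : c = 0 := by omega
    have hempty : ∀ k ∈ Finset.Ico i j, ¬ ((x.eraseIdx i).getD k false) := by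
      have := Finset.card_eq_zero.mp hceq
      intro k hk hkk
      have : k ∈ (∅ : Finset ℕ) := by
        rw [← this]; exact Finset.mem_filter.mpr ⟨hk, hkk⟩
      simp at this
    refine ext_erase x y i j hij hi hj hlen hz false (by simpa using hbx)
      (by simpa using hby) ?_
    intro k h1 h2
    simpa using hempty k (Finset.mem_Ico.mpr ⟨h1, h2⟩)

lemma ext_getD (x y : List Bool) (hlen : x.length = y.length)
    (h : ∀ k, k < x.length → x.getD k false = y.getD k false) : x = y := by
  apply List.ext_getElem hlen
  intro k hk1 hk2
  rw [← List.getD_eq_getElem x false hk1, ← List.getD_eq_getElem y false hk2]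
  exact h k hk1

lemma sub_part (n : ℕ) (hn : 1 ≤ n) (x y : List Bool) (hx : x.length = n)
    (hy : y.length = n) (hne : x ≠ y) (hmod : vtSyn x % (2*n) = vtSyn y % (2*n))
    (z : List Bool) (hdx : dHL x z ≤ 1) (hdy : dHL y z ≤ 1) : False := by
  classical
  set D := (Finset.range n).filter (fun k => x.getD k false ≠ y.getD k false) with hD
  have hsub : D ⊆ ((Finset.range n).filter (fun k => x.getD k false ≠ z.getD k false))
      ∪ ((Finset.range n).filter (fun k => y.getD k false ≠ z.getD k false)) := by
    intro k hk
    simp only [hD, Finset.mem_filter, Finset.mem_union, Finset.mem_range, ne_eq] at *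
    by_cases h : x.getD k false = z.getD k false
    · exact Or.inr ⟨hk.1, fun hh => hk.2 (h.trans hh.symm)⟩
    · exact Or.inl ⟨hk.1, h⟩
  have hcard : D.card ≤ 2 := by
    have h1 := Finset.card_le_card hsub
    have h2 := Finset.card_union_le
      ((Finset.range n).filter (fun k => x.getD k false ≠ z.getD k false))
      ((Finset.range n).filter (fun k => y.getD k false ≠ z.getD k false))
    have e1 : ((Finset.range n).filter
        (fun k => x.getD k false ≠ z.getD k false)).card = dHL x z := by rw [dHL, hx]
    have e2 : ((Finset.range n).filter
        (fun k => y.getD k false ≠ z.getD k false)).card = dHL y z := by rw [dHL, hy]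
    omega
  have hne' : D.Nonempty := by
    rw [Finset.nonempty_iff_ne_empty]
    intro hemp
    apply hne
    apply ext_getD x y (by omega)
    intro k hk
    by_contra hkk
    have hmem : k ∈ D := Finset.mem_filter.mpr ⟨Finset.mem_range.mpr (by omega), hkk⟩
    rw [hemp] at hmem
    simp at hmem
  have hsplit : ∀ (u : List Bool), u.length = n →
      vtSyn u = ∑ k ∈ D, (k+1) * (if u.getD k false then 1 else 0)
        + ∑ k ∈ (Finset.range n).filter (fun k => ¬ (x.getD k false ≠ y.getD k false)),
            (k+1) * (if u.getD k false then 1 else 0) := by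
    intro u hu
    rw [vtSyn, hu]
    exact (Finset.sum_filter_add_sum_filter_not _ _ _).symm
  have hC : ∑ k ∈ (Finset.range n).filter (fun k => ¬ (x.getD k false ≠ y.getD k false)),
      (k+1) * (if x.getD k false then 1 else 0)
    = ∑ k ∈ (Finset.range n).filter (fun k => ¬ (x.getD k false ≠ y.getD k false)),
      (k+1) * (if y.getD k false then 1 else 0) := by
    apply Finset.sum_congr rfl
    intro k hk
    have h2 := (Finset.mem_filter.mp hk).2
    simp only [ne_eq, not_not] at h2
    rw [h2]
  have hmm : (∑ k ∈ D, (k+1) * (if x.getD k false then 1 else 0))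
      ≡ (∑ k ∈ D, (k+1) * (if y.getD k false then 1 else 0)) [MOD 2*n] := by
    have hmm0 : vtSyn x ≡ vtSyn y [MOD 2*n] := hmod
    rw [hsplit x hx, hsplit y hy, hC] at hmm0
    exact Nat.ModEq.add_right_cancel' _ hmm0
  have hmemD : ∀ k ∈ D, k < n ∧ x.getD k false ≠ y.getD k false := by
    intro k hk
    have h2 := Finset.mem_filter.mp hk
    exact ⟨Finset.mem_range.mp h2.1, h2.2⟩
  have h12 : D.card = 1 ∨ D.card = 2 := by
    have := Finset.card_pos.mpr hne'
    omega
  rcases h12 with h1 | h2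
  · obtain ⟨k, hk⟩ := Finset.card_eq_one.mp h1
    obtain ⟨hkn, hkne⟩ := hmemD k (by rw [hk]; exact Finset.mem_singleton_self k)
    rw [hk, Finset.sum_singleton, Finset.sum_singleton] at hmm
    have hA : (k+1) * (if x.getD k false then 1 else 0) < 2*n := by
      by_cases h : x.getD k false = true
      · rw [if_pos h]; omega
      · rw [if_neg h]; omega
    have hB : (k+1) * (if y.getD k false then 1 else 0) < 2*n := by
      by_cases h : y.getD k false = true
      · rw [if_pos h]; omega
      · rw [if_neg h]; omega
    have heq : (k+1) * (if x.getD k false then 1 else 0)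
        = (k+1) * (if y.getD k false then 1 else 0) := by
      have h3 : _ % (2*n) = _ % (2*n) := hmm
      rwa [Nat.mod_eq_of_lt hA, Nat.mod_eq_of_lt hB] at h3
    cases hxk : x.getD k false <;> cases hyk : y.getD k false <;>
      rw [hxk, hyk] at heq hkne <;> simp at heq hkne <;> omega
  · obtain ⟨k, l, hkl, hD2⟩ := Finset.card_eq_two.mp h2
    obtain ⟨hkn, hkne⟩ := hmemD k (by rw [hD2]; simp)
    obtain ⟨hln, hlne⟩ := hmemD l (by rw [hD2]; simp)
    rw [hD2, Finset.sum_pair hkl, Finset.sum_pair hkl] at hmm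
    have hA : (k+1) * (if x.getD k false then 1 else 0)
        + (l+1) * (if x.getD l false then 1 else 0) < 2*n := by
      by_cases h : x.getD k false = true <;> by_cases h' : x.getD l false = true
      · rw [if_pos h, if_pos h']; omega
      · rw [if_pos h, if_neg h']; omega
      · rw [if_neg h, if_pos h']; omega
      · rw [if_neg h, if_neg h']; omega
    have hB : (k+1) * (if y.getD k false then 1 else 0)
        + (l+1) * (if y.getD l false then 1 else 0) < 2*n := by
      by_cases h : y.getD k false = true <;> by_cases h' : y.getD l false = true
      · rw [if_pos h, if_pos h']; omega
      · rw [if_pos h, if_neg h']; omega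
      · rw [if_neg h, if_pos h']; omega
      · rw [if_neg h, if_neg h']; omega
    have heq : (k+1) * (if x.getD k false then 1 else 0)
          + (l+1) * (if x.getD l false then 1 else 0)
        = (k+1) * (if y.getD k false then 1 else 0)
          + (l+1) * (if y.getD l false then 1 else 0) := by
      have h3 : _ % (2*n) = _ % (2*n) := hmm
      rwa [Nat.mod_eq_of_lt hA, Nat.mod_eq_of_lt hB] at h3
    cases hxk : x.getD k false <;> cases hyk : y.getD k false <;>
      cases hxl : x.getD l false <;> cases hyl : y.getD l false <;>
      (rw [hxk, hyk] at hkne; rw [hxl, hyl] at hlne; rw [hxk, hyk, hxl, hyl] at heq) <;>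
      simp at heq hkne hlne <;> omega


set_option linter.unreachableTactic false
set_option linter.unusedTactic false

/-- For distinct codewords of the VT code `{x : Σ i·x_i ≡ s (mod 2n)}`, the
single-deletion balls are disjoint and the single-substitution balls are disjoint. -/
theorem stmt9 (n : ℕ) (hn : 1 ≤ n) (s : ℕ) (hs : s ≤ 2 * n - 1)
    (x y : List Bool) (hx : x.length = n) (hy : y.length = n) (hne : x ≠ y)
    (hxs : vtSyn x % (2 * n) = s) (hys : vtSyn y % (2 * n) = s) :
    delBall x ∩ delBall y = ∅ ∧ subBallL x ∩ subBallL y = ∅ := by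
  constructor
  · rw [Set.eq_empty_iff_forall_notMem]
    intro z hzm
    simp only [delBall, Set.mem_inter_iff, Set.mem_setOf_eq] at hzm
    obtain ⟨⟨i, hi, rfl⟩, j, hj, hzij⟩ := hzm
    have hmod : vtSyn x ≡ vtSyn y [MOD 2*n] := by
      unfold Nat.ModEq
      rw [hxs, hys]
    have hbx := syn_erase_bound x i hi
    have hby := syn_erase_bound y j hj
    rw [syn_erase x i hi, syn_erase y j hj, hzij] at hmod
    have hdd := Nat.ModEq.add_left_cancel' _ hmod
    have hww : wgt (x.eraseIdx i) i = wgt (y.eraseIdx j) i := by rw [hzij]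
    rw [hww] at hbx
    have heq : (i + 1) * (if x.getD i false then 1 else 0) + wgt (x.eraseIdx i) i
        = (j + 1) * (if y.getD j false then 1 else 0) + wgt (y.eraseIdx j) j := by
      rw [hww]
      have h3 : ((i + 1) * (if x.getD i false then 1 else 0) + wgt (y.eraseIdx j) i) % (2*n)
          = ((j + 1) * (if y.getD j false then 1 else 0) + wgt (y.eraseIdx j) j) % (2*n) := hdd
      rwa [Nat.mod_eq_of_lt (by omega), Nat.mod_eq_of_lt (by omega)] at h3
    rcases le_total i j with hij | hij
    · exact hne (del_eq x y i j hij hi hj (by omega) hzij heq)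
    · exact hne (del_eq y x j i hij hj hi (by omega) hzij.symm heq.symm).symm
  · rw [Set.eq_empty_iff_forall_notMem]
    intro z hzm
    simp only [subBallL, Set.mem_inter_iff, Set.mem_setOf_eq] at hzm
    obtain ⟨⟨hz1, hdx⟩, hz2, hdy⟩ := hzm
    exact sub_part n hn x y hx hy hne (by rw [hxs, hys]) z hdx hdy
end

section
/- Fix s_0 ∈ [0,3] and s_1 ∈ [0, 2n-1], and define C_1 = {x ∈ {0,1}^n : wt(x) ≡ s_0 (mod 4) and Σ_{i=1}^n i·x_i ≡ s_1 (mod 2n)}. Then for any two distinct sequences x, y ∈ C_1, the Hamming distance satisfies d_H(x,y) ≥ 4. -/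
lemma count_true_eq (l : List Bool) :
    l.count true = (Finset.range l.length).sum (fun i => if l.getD i false then 1 else 0) := by
  induction l with
  | nil => simp
  | cons a t ih =>
    rw [List.count_cons]
    simp only [List.length_cons]
    rw [Finset.sum_range_succ']
    simp only [List.getD_cons_succ, List.getD_cons_zero]
    rw [← ih]
    cases a <;> simp [add_comm]

/-- For distinct codewords of
`C₁ = {x : wt(x) ≡ s₀ (mod 4), Σ i·x_i ≡ s₁ (mod 2n)}`, the Hamming distance is ≥ 4. -/
theorem stmt10 (n : ℕ) (hn : 1 ≤ n) (s0 s1 : ℕ) (hs0 : s0 ≤ 3) (hs1 : s1 ≤ 2 * n - 1)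
    (x y : List Bool) (hx : x.length = n) (hy : y.length = n) (hne : x ≠ y)
    (hx0 : x.count true % 4 = s0) (hy0 : y.count true % 4 = s0)
    (hx1 : vtSyn x % (2 * n) = s1) (hy1 : vtSyn y % (2 * n) = s1) :
    4 ≤ dHL x y := by
  classical
  set D := (Finset.range n).filter (fun i => x.getD i false ≠ y.getD i false) with hD
  have hdH : dHL x y = D.card := by rw [dHL, hx]
  set f : ℕ → ℤ := fun i => if x.getD i false then 1 else 0 with hf
  set g : ℕ → ℤ := fun i => if y.getD i false then 1 else 0 with hg
  -- nonemptiness of D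
  have hDne : D.Nonempty := by
    by_contra h
    rw [Finset.not_nonempty_iff_eq_empty] at h
    apply hne
    apply List.ext_getElem (hx.trans hy.symm)
    intro i h1 h2
    have hi : i ∈ Finset.range n := Finset.mem_range.2 (hx ▸ h1)
    have hxy : x.getD i false = y.getD i false := by
      by_contra hc
      have : i ∈ D := Finset.mem_filter.2 ⟨hi, hc⟩
      simp [h] at this
    rwa [List.getD_eq_getElem _ _ h1, List.getD_eq_getElem _ _ h2] at hxy
  have hterm : ∀ i ∈ D, (g i - f i = 1 ∨ g i - f i = -1) := by
    intro i hi
    have hne2 := (Finset.mem_filter.1 hi).2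
    cases hxi : x.getD i false <;> cases hyi : y.getD i false
    · exact absurd (hxi.trans hyi.symm) hne2
    · left; simp only [hf, hg, hxi, hyi]; norm_num
    · right; simp only [hf, hg, hxi, hyi]; norm_num
    · exact absurd (hxi.trans hyi.symm) hne2
  have hrestrict : ∀ (F : ℕ → ℤ),
      ∑ i ∈ Finset.range n, F i * (g i - f i) = ∑ i ∈ D, F i * (g i - f i) := by
    intro F
    refine (Finset.sum_subset (Finset.filter_subset _ _) ?_).symm
    intro i hi hnot
    have : x.getD i false = y.getD i false := by
      by_contra hc
      exact hnot (Finset.mem_filter.2 ⟨hi, hc⟩)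
    simp only [hf, hg, this, sub_self, mul_zero]
  have hxc : (x.count true : ℤ) = ∑ i ∈ Finset.range n, f i := by
    rw [count_true_eq, hx]
    push_cast
    rfl
  have hyc : (y.count true : ℤ) = ∑ i ∈ Finset.range n, g i := by
    rw [count_true_eq, hy]
    push_cast
    rfl
  have h4 : (4 : ℤ) ∣ ∑ i ∈ D, (g i - f i) := by
    have hmod : x.count true ≡ y.count true [MOD 4] := hx0.trans hy0.symm
    have hdvd := hmod.dvd
    push_cast at hdvd
    rw [hyc, hxc, ← Finset.sum_sub_distrib] at hdvd
    have hr := hrestrict (fun _ => (1 : ℤ))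
    simp only [one_mul] at hr
    rwa [hr] at hdvd
  have hxs : (vtSyn x : ℤ) = ∑ i ∈ Finset.range n, ((i : ℤ) + 1) * f i := by
    rw [vtSyn, hx]
    push_cast
    rfl
  have hys : (vtSyn y : ℤ) = ∑ i ∈ Finset.range n, ((i : ℤ) + 1) * g i := by
    rw [vtSyn, hy]
    push_cast
    rfl
  have h2n : (2 * (n : ℤ)) ∣ ∑ i ∈ D, ((i : ℤ) + 1) * (g i - f i) := by
    have hmod : vtSyn x ≡ vtSyn y [MOD 2 * n] := hx1.trans hy1.symm
    have hdvd := hmod.dvd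
    push_cast at hdvd
    rw [hys, hxs, ← Finset.sum_sub_distrib] at hdvd
    simp only [← mul_sub] at hdvd
    rwa [hrestrict] at hdvd
  -- suppose for contradiction D.card ≤ 3
  by_contra hcon
  push_neg at hcon
  rw [hdH] at hcon
  have hcard3 : D.card ≤ 3 := by omega
  -- the weight-difference sum is 0
  have habs : |∑ i ∈ D, (g i - f i)| ≤ (D.card : ℤ) := by
    calc |∑ i ∈ D, (g i - f i)| ≤ ∑ i ∈ D, |g i - f i| := Finset.abs_sum_le_sum_abs _ _
    _ = ∑ i ∈ D, 1 := by
        refine Finset.sum_congr rfl fun i hi => ?_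
        rcases hterm i hi with h | h <;> rw [h] <;> norm_num
    _ = (D.card : ℤ) := by simp
  have hS0 : ∑ i ∈ D, (g i - f i) = 0 := by
    refine Int.eq_zero_of_abs_lt_dvd h4 ?_
    calc |∑ i ∈ D, (g i - f i)| ≤ (D.card : ℤ) := habs
    _ < 4 := by exact_mod_cast (by omega : D.card < 4)
  -- parity: D.card is even
  have hpar : D.card % 2 = 0 := by
    have h1 : (∑ i ∈ D, (g i - f i)) % 2 = (∑ i ∈ D, (g i - f i) % 2) % 2 :=
      Finset.sum_int_mod _ _ _
    have h2 : ∀ i ∈ D, (g i - f i) % 2 = 1 := by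
      intro i hi
      rcases hterm i hi with h | h <;> rw [h] <;> decide
    rw [Finset.sum_congr rfl h2, hS0, Finset.sum_const, nsmul_eq_mul, mul_one] at h1
    omega
  have hcard1 : 1 ≤ D.card := Finset.card_pos.2 hDne
  have hcard2 : D.card = 2 := by omega
  obtain ⟨i, j, hij, hDij⟩ := Finset.card_eq_two.1 hcard2
  have hiD : i ∈ D := by rw [hDij]; simp
  have hjD : j ∈ D := by rw [hDij]; simp
  have hiN : i < n := Finset.mem_range.1 (Finset.mem_filter.1 hiD).1
  have hjN : j < n := Finset.mem_range.1 (Finset.mem_filter.1 hjD).1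
  rw [hDij, Finset.sum_pair hij] at hS0 h2n
  rcases hterm i hiD with h1 | h1 <;> rcases hterm j hjD with h2 | h2
  · rw [h1, h2] at hS0; norm_num at hS0
  · rw [h1, h2] at h2n
    have hdvd2 : (2 * (n : ℤ)) ∣ ((i : ℤ) - j) := by
      rw [show (i : ℤ) - j = ((i : ℤ) + 1) * 1 + ((j : ℤ) + 1) * (-1) by ring]
      exact h2n
    have hz : (i : ℤ) - j = 0 := by
      refine Int.eq_zero_of_abs_lt_dvd hdvd2 ?_
      rw [abs_sub_lt_iff]
      constructor <;> push_cast <;> omega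
    exact hij (by exact_mod_cast sub_eq_zero.1 hz)
  · rw [h1, h2] at h2n
    have hdvd2 : (2 * (n : ℤ)) ∣ ((j : ℤ) - i) := by
      rw [show (j : ℤ) - i = ((i : ℤ) + 1) * (-1) + ((j : ℤ) + 1) * 1 by ring]
      exact h2n
    have hz : (j : ℤ) - i = 0 := by
      refine Int.eq_zero_of_abs_lt_dvd hdvd2 ?_
      rw [abs_sub_lt_iff]
      constructor <;> push_cast <;> omega
    exact hij (by exact_mod_cast (sub_eq_zero.1 hz).symm)
  · rw [h1, h2] at hS0; norm_num at hS0
end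

section
/- Fix s_0 ∈ [0,3] and s_1 ∈ [0, 2n-1], and let C_1 = {x ∈ {0,1}^n : wt(x) ≡ s_0 (mod 4), Σ_{i=1}^n i·x_i ≡ s_1 (mod 2n)}. Let x, y ∈ C_1 be distinct, let d_H = d_H(x,y) and j_1 < j_2 < … < j_{d_H} the disagreement positions. Then it is impossible that x_{[j_2+1, j_{d_H}]} = y_{[j_2, j_{d_H}-1]} (i.e., x with x_{j_2} deleted agrees with y with y_{j_{d_H}} deleted on the entire middle segment while differing only at position j_1). -/
open Finset in
private lemma stmt11_count_true_eq (l : List Bool) :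
    l.count true = ∑ i ∈ range l.length, (if l.getD i false then 1 else 0) := by
  induction l with
  | nil => simp
  | cons a t ih =>
    rw [List.length_cons, Finset.sum_range_succ']
    simp [List.count_cons, ih, add_comm]

open Finset in
private lemma stmt11_key_sum (P Q : ℕ → ℤ) (c : ℕ → ℤ) (n p1 p2 pd : ℕ)
    (hp1n : p1 < n) (hpdn : pd < n) (hlt : p1 < p2) (hp2d : p2 ≤ pd)
    (hag : ∀ i, i ≠ p1 → (i < p2 ∨ pd < i) → P i = Q i)
    (hsh : ∀ i, 1 ≤ i → i ≤ pd - p2 → P (p2 + i) = Q (p2 + (i-1))) :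
    ∑ i ∈ range n, c i * (P i - Q i) =
      c p1 * (P p1 - Q p1) + (c p2 * P p2 - c pd * Q pd
        + ∑ i ∈ range (pd - p2), (c (p2+i+1) - c (p2+i)) * Q (p2+i)) := by
  set m := pd - p2 with hm
  have h1 : ∑ i ∈ range n, c i * (P i - Q i)
      = ∑ i ∈ insert p1 (Finset.Ico p2 (pd+1)), c i * (P i - Q i) := by
    apply (Finset.sum_subset ?_ ?_).symm
    · intro i hi
      simp only [Finset.mem_insert, Finset.mem_Ico] at hi
      simp only [Finset.mem_range]
      omega
    · intro i hi hni
      simp only [Finset.mem_insert, Finset.mem_Ico] at hni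
      have h2 : i ≠ p1 ∧ (i < p2 ∨ pd < i) := by omega
      rw [hag i h2.1 h2.2]; ring
  rw [h1, Finset.sum_insert (by simp only [Finset.mem_Ico]; omega),
    Finset.sum_Ico_eq_sum_range, show pd + 1 - p2 = m + 1 from by omega]
  congr 1
  have h3 : ∑ i ∈ range (m+1), c (p2+i)*(P (p2+i) - Q (p2+i))
      = ∑ i ∈ range (m+1), c (p2+i)*P (p2+i) - ∑ i ∈ range (m+1), c (p2+i)*Q (p2+i) := by
    rw [← Finset.sum_sub_distrib]; exact Finset.sum_congr rfl fun i _ => by ring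
  have h4 : ∑ i ∈ range (m+1), c (p2+i)*P (p2+i)
      = c p2 * P p2 + ∑ i ∈ range m, c (p2+i+1) * Q (p2+i) := by
    rw [Finset.sum_range_succ', add_comm, Nat.add_zero]
    congr 1
    · apply Finset.sum_congr rfl
      intro i hi
      simp only [Finset.mem_range] at hi
      have hs := hsh (i+1) (by omega) (by omega)
      simp only [Nat.add_sub_cancel] at hs
      rw [show p2+i+1 = p2+(i+1) from by ring, hs]
  have h5 : ∑ i ∈ range (m+1), c (p2+i)*Q (p2+i)
      = ∑ i ∈ range m, c (p2+i)*Q (p2+i) + c pd * Q pd := by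
    rw [Finset.sum_range_succ, show p2+m = pd from by omega]
  have h6 : ∑ i ∈ range m, (c (p2+i+1) - c (p2+i)) * Q (p2+i)
      = ∑ i ∈ range m, c (p2+i+1)*Q (p2+i) - ∑ i ∈ range m, c (p2+i)*Q (p2+i) := by
    rw [← Finset.sum_sub_distrib]; exact Finset.sum_congr rfl fun i _ => by ring
  rw [h3, h4, h5, h6]; ring

/-- For distinct codewords `x, y` of
`C₁ = {x : wt(x) ≡ s₀ (mod 4), Σ i·x_i ≡ s₁ (mod 2n)}`, with (0-indexed) smallest
disagreement position `p1`, second smallest `p2`, and largest `pd`, it is impossible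
that `x_{[j₂+1, j_d]} = y_{[j₂, j_d−1]}` (substrings expressed via `drop`/`take`). -/
theorem stmt11 (n : ℕ) (hn : 1 ≤ n) (s0 s1 : ℕ) (hs0 : s0 ≤ 3) (hs1 : s1 ≤ 2 * n - 1)
    (x y : List Bool) (hx : x.length = n) (hy : y.length = n) (hne : x ≠ y)
    (hx0 : x.count true % 4 = s0) (hy0 : y.count true % 4 = s0)
    (hx1 : vtSyn x % (2 * n) = s1) (hy1 : vtSyn y % (2 * n) = s1)
    (p1 p2 pd : ℕ)
    (hp1 : x.getD p1 false ≠ y.getD p1 false)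
    (hp2 : x.getD p2 false ≠ y.getD p2 false)
    (hpd : x.getD pd false ≠ y.getD pd false)
    (hmin : ∀ k, x.getD k false ≠ y.getD k false → p1 ≤ k)
    (hlt : p1 < p2)
    (h2nd : ∀ k, x.getD k false ≠ y.getD k false → k ≠ p1 → p2 ≤ k)
    (hmax : ∀ k, k < n → x.getD k false ≠ y.getD k false → k ≤ pd) :
    ¬ ((x.drop (p2 + 1)).take (pd - p2) = (y.drop p2).take (pd - p2)) := by
  intro h
  open Finset in
  have hxy : ∀ k, n ≤ k → x.getD k false = y.getD k false := by
    intro k hk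
    rw [List.getD_eq_default x false (by omega), List.getD_eq_default y false (by omega)]
  have hp1n : p1 < n := by by_contra hc; exact hp1 (hxy p1 (by omega))
  have hp2n : p2 < n := by by_contra hc; exact hp2 (hxy p2 (by omega))
  have hpdn : pd < n := by by_contra hc; exact hpd (hxy pd (by omega))
  have hp2d : p2 ≤ pd := hmax p2 hp2n hp2
  have hshift : ∀ k, p2 < k → k ≤ pd → x.getD k false = y.getD (k-1) false := by
    intro k h1 h2
    have hi : k - p2 - 1 < pd - p2 := by omega
    have h3 := congrArg (fun l => l.getD (k - p2 - 1) false) h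
    simp only [List.getD_eq_getElem?_getD, List.getElem?_take, hi, if_true,
      List.getElem?_drop] at h3
    have e1 : p2 + 1 + (k - p2 - 1) = k := by omega
    have e2 : p2 + (k - p2 - 1) = k - 1 := by omega
    rw [e1, e2] at h3
    simp only [List.getD_eq_getElem?_getD]
    exact h3
  set P : ℕ → ℤ := fun i => if x.getD i false then 1 else 0 with hPdef
  set Q : ℕ → ℤ := fun i => if y.getD i false then 1 else 0 with hQdef
  have hPQshift : ∀ i, 1 ≤ i → i ≤ pd - p2 → P (p2 + i) = Q (p2 + (i-1)) := by
    intro i h1 h2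
    have hthis := hshift (p2 + i) (by omega) (by omega)
    have e : p2 + i - 1 = p2 + (i-1) := by omega
    rw [e] at hthis
    simp only [hPdef, hQdef]
    rw [hthis]
  have hag : ∀ i, i ≠ p1 → (i < p2 ∨ pd < i) → P i = Q i := by
    intro i hi hr
    have hthis : x.getD i false = y.getD i false := by
      by_contra hc
      have h1 := h2nd i hc hi
      have h2 : i ≤ pd := by
        rcases lt_or_ge i n with h3 | h3
        · exact hmax i h3 hc
        · exact absurd (hxy i h3) hc
      omega
    simp only [hPdef, hQdef]
    rw [hthis]
  -- divisibilities
  have hw4 : (4:ℤ) ∣ ∑ i ∈ Finset.range n, (P i - Q i) := by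
    have h1 : (4:ℤ) ∣ (x.count true : ℤ) - (y.count true : ℤ) :=
      Nat.ModEq.dvd (by omega : y.count true % 4 = x.count true % 4)
    rw [stmt11_count_true_eq, stmt11_count_true_eq, hx, hy] at h1
    rw [Finset.sum_sub_distrib]
    convert h1 using 2 <;> push_cast <;> simp [hPdef, hQdef]
  have hv2n : (2*(n:ℤ)) ∣ ∑ i ∈ Finset.range n, ((i:ℤ)+1) * (P i - Q i) := by
    have h1 : ((2*n:ℕ):ℤ) ∣ (vtSyn x : ℤ) - (vtSyn y : ℤ) :=
      Nat.ModEq.dvd (by omega : vtSyn y % (2*n) = vtSyn x % (2*n))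
    simp only [vtSyn, hx, hy] at h1
    push_cast at h1
    have e : ∀ i ∈ Finset.range n, ((i:ℤ)+1) * (P i - Q i)
        = ((i:ℤ)+1) * P i - ((i:ℤ)+1) * Q i := by intro i _; ring
    rw [Finset.sum_congr rfl e, Finset.sum_sub_distrib]
    convert h1 using 2 <;> push_cast <;> simp [hPdef, hQdef, mul_comm]
  -- sum identities
  have hW := stmt11_key_sum P Q (fun _ => 1) n p1 p2 pd hp1n hpdn hlt hp2d hag hPQshift
  have hV := stmt11_key_sum P Q (fun i => (i:ℤ)+1) n p1 p2 pd hp1n hpdn hlt hp2d hag hPQshift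
  simp only [one_mul, sub_self, zero_mul, Finset.sum_const_zero, add_zero] at hW
  obtain ⟨S0, hS0eq⟩ : ∃ S:ℤ, ∑ i ∈ Finset.range (pd - p2),
      ((((p2+i+1:ℕ):ℤ)+1) - (((p2+i:ℕ):ℤ)+1)) * Q (p2+i) = S := ⟨_, rfl⟩
  have hS0form : S0 = ∑ i ∈ Finset.range (pd - p2), Q (p2+i) := by
    rw [← hS0eq]
    apply Finset.sum_congr rfl
    intro i _
    push_cast
    ring
  have hS0lb : 0 ≤ S0 := by
    rw [hS0form]
    apply Finset.sum_nonneg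
    intro i _
    simp only [hQdef]
    split <;> norm_num
  have hS0ub : S0 ≤ ((pd - p2 : ℕ) : ℤ) := by
    rw [hS0form]
    calc ∑ i ∈ Finset.range (pd - p2), Q (p2+i)
        ≤ ∑ _i ∈ Finset.range (pd - p2), (1:ℤ) := by
          apply Finset.sum_le_sum
          intro i _
          simp only [hQdef]
          split <;> norm_num
      _ = ((pd - p2 : ℕ) : ℤ) := by simp
  rw [hS0eq] at hV
  -- per-position values
  have hb : Q p1 = 1 - P p1 := by
    simp only [hPdef, hQdef]
    cases hu : x.getD p1 false <;> cases hv : y.getD p1 false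
    · exact absurd (hu.trans hv.symm) hp1
    · norm_num
    · norm_num
    · exact absurd (hu.trans hv.symm) hp1
  have ha : P p1 = 0 ∨ P p1 = 1 := by
    simp only [hPdef]; split <;> simp
  have hc : P p2 = 0 ∨ P p2 = 1 := by
    simp only [hPdef]; split <;> simp
  have hd : Q pd = 0 ∨ Q pd = 1 := by
    simp only [hQdef]; split <;> simp
  rw [hW] at hw4
  rw [hV] at hv2n
  rw [hb] at hw4 hv2n
  have hp1z : (p1:ℤ) < (p2:ℤ) := by exact_mod_cast hlt
  have hp2z : (p2:ℤ) ≤ (pd:ℤ) := by exact_mod_cast hp2d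
  have hpdz : (pd:ℤ) < (n:ℤ) := by exact_mod_cast hpdn
  have hmz : ((pd - p2 : ℕ) : ℤ) = (pd:ℤ) - (p2:ℤ) := by omega
  rw [hmz] at hS0ub
  rcases ha with ha | ha <;> rcases hc with hc | hc <;> rcases hd with hd | hd <;>
      rw [ha, hc, hd] at hw4 hv2n
  · -- a=0,c=0,d=0 : W = -1
    omega
  · -- a=0,c=0,d=1 : W = -2
    omega
  · -- a=0,c=1,d=0 : good case B : V = p2 - p1 + S0 > 0
    have heq : ((p1:ℤ)+1) * (0 - (1-0)) + ((((p2:ℤ))+1) * 1 - (((pd:ℤ))+1) * 0 + S0)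
        = (p2:ℤ) - (p1:ℤ) + S0 := by ring
    rw [heq] at hv2n
    have hle := Int.le_of_dvd (by omega) hv2n
    omega
  ·
    omega
  · -- a=1,c=0,d=0 : W = 1
    omega
  · -- a=1,c=0,d=1 : good case A : V = p1 - pd + S0 < 0
    have heq : ((p1:ℤ)+1) * (1 - (1-1)) + ((((p2:ℤ))+1) * 0 - (((pd:ℤ))+1) * 1 + S0)
        = (p1:ℤ) - (pd:ℤ) + S0 := by ring
    rw [heq] at hv2n
    have hv2n' : (2*(n:ℤ)) ∣ -((p1:ℤ) - (pd:ℤ) + S0) := dvd_neg.mpr hv2n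
    have hle := Int.le_of_dvd (by omega) hv2n'
    omega
  · -- a=1,c=1,d=0 : W = 2
    omega
  · -- a=1,c=1,d=1 : W = 1
    omega
end

section
/- For all positive integers n, t', t, the number of binary sequences of length n in which every substring of period at most t' has length at most t is at least 2^n·(1 - n·(1/2)^{t - t'}). In particular, taking t = ⌈log_2 n⌉ + t' + 1, this number is at least 2^{n-1}. -/
/-- Extend a function on `Fin n` to `ℕ` by `false`. -/
def extBool {n : ℕ} (f : Fin n → Bool) (k : ℕ) : Bool :=
  if h : k < n then f ⟨k, h⟩ else false

def Rset (n t' t : ℕ) : Set (Fin n → Bool) :=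
  {f | ∀ i j, j < n → i ≤ j →
    (∃ p, 1 ≤ p ∧ p ≤ t' ∧ ∀ k, i ≤ k → k + p ≤ j → extBool f k = extBool f (k + p)) →
    j - i + 1 ≤ t}

/-- auxiliary periodic set -/
def Aset (n t i p : ℕ) : Set (Fin n → Bool) :=
  {f | ∀ k, i ≤ k → k + p ≤ i + t → extBool f k = extBool f (k + p)}

open Finset in
lemma my_ncard_biUnion_le {α ι : Type*} (s : Finset ι) (F : ι → Set α) :
    (⋃ i ∈ s, F i).ncard ≤ ∑ i ∈ s, (F i).ncard := by
  classical
  induction s using Finset.induction with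
  | empty => simp
  | @insert a s h ih =>
    rw [Finset.set_biUnion_insert, Finset.sum_insert h]
    exact le_trans (Set.ncard_union_le _ _) (by omega)

lemma card_interval (n i p t : ℕ) (hpt : p ≤ t + 1) (hit : i + t < n) :
    Fintype.card {m : Fin n // i + p ≤ (m : ℕ) ∧ (m : ℕ) ≤ i + t} = t + 1 - p := by
  rw [← Fintype.card_fin (t + 1 - p)]
  refine Fintype.card_congr (Equiv.symm ?_)
  exact {
    toFun := fun j => ⟨⟨i + p + j.1, by omega⟩, by constructor <;> simp <;> omega⟩
    invFun := fun m => ⟨(m.1 : ℕ) - (i + p), by obtain ⟨h1, h2⟩ := m.2; omega⟩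
    left_inv := fun j => by ext; simp
    right_inv := fun m => by obtain ⟨h1, h2⟩ := m.2; ext; simp; omega }

lemma Aset_card_le (n t i p : ℕ) (hp : 1 ≤ p) (hpt : p ≤ t) (hit : i + t < n) :
    Nat.card (Aset n t i p) ≤ 2 ^ (n - (t + 1 - p)) := by
  classical
  have hinj : Function.Injective
      (fun (f : Aset n t i p) (m : {m : Fin n // ¬(i + p ≤ (m : ℕ) ∧ (m : ℕ) ≤ i + t)}) =>
        f.1 m.1) := by
    rintro ⟨f, hf⟩ ⟨g, hg⟩ h
    have key : ∀ N, ∀ m : Fin n, (m : ℕ) < N → f m = g m := by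
      intro N
      induction N with
      | zero => intro m hm; omega
      | succ N ih =>
        intro m hm
        by_cases hD : i + p ≤ (m : ℕ) ∧ (m : ℕ) ≤ i + t
        · have hk : i ≤ (m : ℕ) - p := by omega
          have hkp : ((m : ℕ) - p) + p ≤ i + t := by omega
          have h1 := hf _ hk hkp
          have h2 := hg _ hk hkp
          have e : (m : ℕ) - p + p = (m : ℕ) := by omega
          rw [e] at h1 h2
          have hlt : (m : ℕ) - p < n := by omega
          rw [extBool, extBool, dif_pos hlt, dif_pos m.2] at h1 h2
          have hm' : f ⟨(m : ℕ) - p, hlt⟩ = g ⟨(m : ℕ) - p, hlt⟩ := ih _ (by simp; omega)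
          rw [← h1, ← h2, hm']
        · exact congrFun h ⟨m, hD⟩
    exact Subtype.ext (funext fun m => key (n + 1) m (by omega))
  calc Nat.card (Aset n t i p)
      ≤ Nat.card ({m : Fin n // ¬(i + p ≤ (m : ℕ) ∧ (m : ℕ) ≤ i + t)} → Bool) :=
        Nat.card_le_card_of_injective _ hinj
    _ = 2 ^ (n - (t + 1 - p)) := by
        rw [Nat.card_eq_fintype_card, Fintype.card_fun, Fintype.card_bool,
          Fintype.card_subtype_compl, card_interval n i p t (by omega) hit, Fintype.card_fin]

lemma compl_subset (n t' t : ℕ) :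
    (Rset n t' t)ᶜ ⊆ ⋃ i ∈ Finset.range (n - t), ⋃ p ∈ Finset.Icc 1 t', Aset n t i p := by
  intro f hf
  simp only [Rset, Set.mem_compl_iff, Set.mem_setOf_eq] at hf
  push_neg at hf
  obtain ⟨i, j, hj, hij, ⟨p, hp1, hp2, hper⟩, hlen⟩ := hf
  have hit : i + t ≤ j := by omega
  simp only [Set.mem_iUnion, Finset.mem_range, Finset.mem_Icc]
  exact ⟨i, by omega, p, ⟨hp1, hp2⟩, fun k hk hkp => hper k hk (by omega)⟩

lemma geo (c : ℕ) : ∀ t', (∑ p ∈ Finset.Icc 1 t', 2 ^ (c + p)) ≤ 2 ^ (c + t' + 1) := by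
  intro t'
  induction t' with
  | zero => simp
  | succ m ih =>
    rw [Finset.sum_Icc_succ_top (by omega)]
    have : 2 ^ (c + (m + 1) + 1) = 2 ^ (c + m + 1) + 2 ^ (c + (m + 1)) := by ring
    omega

lemma bad_card (n t' t : ℕ) (ht't : t' < t) (htn : t < n) :
    ((Rset n t' t)ᶜ).ncard ≤ n * 2 ^ (n - (t - t')) := by
  have h1 := Set.ncard_le_ncard (compl_subset n t' t) (Set.toFinite _)
  have h2 := my_ncard_biUnion_le (Finset.range (n - t))
    (fun i => ⋃ p ∈ Finset.Icc 1 t', Aset n t i p)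
  have h3 : ∀ i ∈ Finset.range (n - t),
      (⋃ p ∈ Finset.Icc 1 t', Aset n t i p).ncard ≤ 2 ^ (n - (t - t')) := by
    intro i hi
    rw [Finset.mem_range] at hi
    refine le_trans (my_ncard_biUnion_le _ _) ?_
    have h4 : ∀ p ∈ Finset.Icc 1 t', (Aset n t i p).ncard ≤ 2 ^ ((n - t - 1) + p) := by
      intro p hp
      rw [Finset.mem_Icc] at hp
      have := Aset_card_le n t i p hp.1 (by omega) (by omega)
      rw [Nat.card_coe_set_eq] at this
      have e : n - (t + 1 - p) = (n - t - 1) + p := by omega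
      rwa [e] at this
    refine le_trans (Finset.sum_le_sum h4) ?_
    have := geo (n - t - 1) t'
    have e : n - t - 1 + t' + 1 = n - (t - t') := by omega
    rwa [e] at this
  calc ((Rset n t' t)ᶜ).ncard ≤ _ := h1
    _ ≤ _ := h2
    _ ≤ ∑ _i ∈ Finset.range (n - t), 2 ^ (n - (t - t')) := Finset.sum_le_sum h3
    _ = (n - t) * 2 ^ (n - (t - t')) := by rw [Finset.sum_const, Finset.card_range, smul_eq_mul]
    _ ≤ n * 2 ^ (n - (t - t')) := Nat.mul_le_mul_right _ (by omega)

/-- `|R(n,t',t)| ≥ 2^n (1 - n (1/2)^{t-t'})`; in particular for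
`t = ⌈log₂ n⌉ + t' + 1` we get `|R(n,t',t)| ≥ 2^{n-1}`. -/
theorem stmt12 (n t' t : ℕ) (hn : 1 ≤ n) (ht' : 1 ≤ t') (ht : 1 ≤ t) :
    ((2 : ℝ) ^ n * (1 - (n : ℝ) * (1 / 2) ^ (t - t')) ≤ Nat.card (Rset n t' t)) ∧
    (t = Nat.clog 2 n + t' + 1 → (2 : ℝ) ^ (n - 1) ≤ Nat.card (Rset n t' t)) := by
  have hcardall : Nat.card (Fin n → Bool) = 2 ^ n := by
    rw [Nat.card_eq_fintype_card, Fintype.card_fun, Fintype.card_bool, Fintype.card_fin]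
  have main : (2 : ℝ) ^ n * (1 - (n : ℝ) * (1 / 2) ^ (t - t')) ≤ Nat.card (Rset n t' t) := by
    rcases le_or_gt n t with hnt | htn
    · have hu : Rset n t' t = Set.univ := by
        ext f
        simp only [Rset, Set.mem_setOf_eq, Set.mem_univ, iff_true]
        intro i j hj hij _
        omega
      rw [hu, Nat.card_coe_set_eq, Set.ncard_univ, hcardall]
      have hx : (0:ℝ) ≤ (n : ℝ) * (1/2)^(t - t') := by positivity
      have hpow : (0:ℝ) < 2 ^ n := by positivity
      push_cast
      nlinarith
    · rcases le_or_gt t t' with htt' | ht't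
      · have e : t - t' = 0 := by omega
        rw [e, pow_zero, mul_one]
        have h1 : (1:ℝ) - n ≤ 0 := by
          have : (1:ℝ) ≤ n := by exact_mod_cast hn
          linarith
        have h2 : (2:ℝ)^n * (1 - n) ≤ 0 :=
          mul_nonpos_of_nonneg_of_nonpos (by positivity) h1
        exact le_trans h2 (Nat.cast_nonneg _)
      · have hbad := bad_card n t' t ht't htn
        have hsum := Set.ncard_add_ncard_compl (Rset n t' t)
        rw [Nat.card_coe_set_eq]
        rw [hcardall] at hsum
        have e2 : (2:ℝ)^(n - (t-t')) * 2^(t-t') = 2^n := by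
          rw [← pow_add]; congr 1; omega
        have key : (2:ℝ)^n * ((n:ℝ) * (1/2)^(t - t')) = (n:ℝ) * 2^(n - (t - t')) := by
          rw [div_pow, one_pow, ← e2]
          field_simp
        have hC : (((Rset n t' t)ᶜ.ncard : ℝ)) ≤ (n:ℝ) * 2^(n - (t-t')) := by
          exact_mod_cast hbad
        have hR : ((Rset n t' t).ncard : ℝ) + ((Rset n t' t)ᶜ.ncard : ℝ) = 2^n := by
          exact_mod_cast congrArg (Nat.cast : ℕ → ℝ) hsum
        nlinarith
  refine ⟨main, fun hteq => le_trans ?_ main⟩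
  have hd : t - t' = Nat.clog 2 n + 1 := by omega
  rw [hd]
  have hup : (n:ℝ) ≤ 2 ^ Nat.clog 2 n := by exact_mod_cast Nat.le_pow_clog one_lt_two n
  have h1 : (n:ℝ) * (1/2)^(Nat.clog 2 n + 1) ≤ 1/2 := by
    rw [pow_succ]
    have hpos : (0:ℝ) < (1/2)^(Nat.clog 2 n) := by positivity
    have h3 : (n:ℝ) * (1/2)^(Nat.clog 2 n) ≤ 1 := by
      calc (n:ℝ) * (1/2)^(Nat.clog 2 n)
          ≤ (2:ℝ)^(Nat.clog 2 n) * (1/2)^(Nat.clog 2 n) :=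
            mul_le_mul_of_nonneg_right hup hpos.le
        _ = 1 := by rw [div_pow, one_pow]; field_simp
    nlinarith
  have h2 : (2:ℝ)^(n-1) * 2 = 2^n := by rw [← pow_succ]; congr 1; omega
  nlinarith [pow_pos (show (0:ℝ) < 2 by norm_num) n]
end

section
/- Let x, y ∈ {0,1}^n be distinct sequences whose single-deletion balls are disjoint. Then for any fixed pair of deletion positions (d_x, d_y) ∈ [n] × [n], the intersection S(x') ∩ S(y') of the single-substitution balls of x' (x with position d_x deleted) and y' (y with position d_y deleted) has size at most 2. -/
lemma getD_ext (u z : List Bool) (hl : z.length = u.length)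
    (h : ∀ k, k < u.length → z.getD k false = u.getD k false) : z = u := by
  apply List.ext_getElem hl
  intro i h1 h2
  have := h i h2
  rwa [List.getD_eq_getElem _ _ h1, List.getD_eq_getElem _ _ h2] at this

lemma key (u v : List Bool) (hl : v.length = u.length) (hne : u ≠ v) :
    Set.ncard (subBallL u ∩ subBallL v) ≤ 2 := by
  classical
  set m := u.length with hm
  set D := (Finset.range m).filter (fun i => u.getD i false ≠ v.getD i false) with hDdef
  have hbool : ∀ a b c : Bool, a ≠ c → b ≠ c → a = b := by decide
  have hzmem : ∀ z ∈ subBallL u ∩ subBallL v,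
      z.length = m ∧
      ((Finset.range m).filter (fun i => u.getD i false ≠ z.getD i false)).card ≤ 1 ∧
      ((Finset.range m).filter (fun i => v.getD i false ≠ z.getD i false)).card ≤ 1 := by
    rintro z ⟨⟨hz1, hz2⟩, ⟨hz3, hz4⟩⟩
    refine ⟨hz1, hz2, ?_⟩
    unfold dHL at hz4
    rwa [hl] at hz4
  -- if the intersection is empty we are done
  rcases Set.eq_empty_or_nonempty (subBallL u ∩ subBallL v) with he | ⟨z0, hz0⟩
  · simp [he]
  obtain ⟨hz0l, hz0u, hz0v⟩ := hzmem z0 hz0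
  have hDsub : D ⊆ ((Finset.range m).filter (fun i => u.getD i false ≠ z0.getD i false)) ∪
      ((Finset.range m).filter (fun i => v.getD i false ≠ z0.getD i false)) := by
    intro i hi
    simp only [hDdef, Finset.mem_filter, Finset.mem_union] at hi ⊢
    by_contra hc
    push_neg at hc
    obtain ⟨h1, h2⟩ := hc
    exact hi.2 ((h1 hi.1).trans (h2 hi.1).symm)
  have hDcard : D.card ≤ 2 :=
    le_trans (Finset.card_le_card hDsub)
      (le_trans (Finset.card_union_le _ _) (by omega))
  have hDpos : 0 < D.card := by
    rcases Finset.card_pos.mpr with _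
    by_contra h
    push_neg at h
    have hDe : D = ∅ := Finset.card_eq_zero.mp (by omega)
    apply hne
    refine (getD_ext u v hl ?_).symm
    intro k hk
    by_contra hk2
    have : k ∈ D := by
      simp only [hDdef, Finset.mem_filter, Finset.mem_range]
      exact ⟨hk, fun h => hk2 h.symm⟩
    simp [hDe] at this
  -- generic "off-set agreement" fact for members of the intersection
  have hoff : ∀ z ∈ subBallL u ∩ subBallL v, ∀ k < m, k ∉ D →
      z.getD k false = u.getD k false := by
    intro z hz k hk hkD
    obtain ⟨hzl, hzu, hzv⟩ := hzmem z hz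
    by_contra hne2
    have hkuz : k ∈ (Finset.range m).filter (fun i => u.getD i false ≠ z.getD i false) := by
      simp only [Finset.mem_filter, Finset.mem_range]
      exact ⟨hk, fun h => hne2 h.symm⟩
    have huv : u.getD k false = v.getD k false := by
      by_contra h
      exact hkD (by simp only [hDdef, Finset.mem_filter, Finset.mem_range]; exact ⟨hk, h⟩)
    -- z agrees with u on D (since filter(u≠z) = {k})
    obtain ⟨i0, hi0⟩ := Finset.card_pos.mp hDpos
    have hi0' := hi0
    rw [hDdef, Finset.mem_filter, Finset.mem_range] at hi0'
    obtain ⟨hi0m, hi0uv⟩ := hi0'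
    have hi0k : i0 ≠ k := fun h => hkD (h ▸ hi0)
    have hzi0 : z.getD i0 false = u.getD i0 false := by
      by_contra h
      have hi0uz : i0 ∈ (Finset.range m).filter (fun i => u.getD i false ≠ z.getD i false) := by
        simp only [Finset.mem_filter, Finset.mem_range]
        exact ⟨hi0m, fun hh => h hh.symm⟩
      exact hi0k (Finset.card_le_one.mp hzu i0 hi0uz k hkuz)
    -- now z differs from v at both i0 and k
    have h1 : i0 ∈ (Finset.range m).filter (fun i => v.getD i false ≠ z.getD i false) := by
      simp only [Finset.mem_filter, Finset.mem_range]
      exact ⟨hi0m, fun hh => hi0uv (hzi0 ▸ hh.symm ▸ rfl)⟩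
    have h2 : k ∈ (Finset.range m).filter (fun i => v.getD i false ≠ z.getD i false) := by
      simp only [Finset.mem_filter, Finset.mem_range]
      refine ⟨hk, fun hh => hne2 ?_⟩
      rw [← hh, ← huv]
    exact hi0k (Finset.card_le_one.mp hzv i0 h1 k h2)
  -- case split on |D|
  interval_cases hc : D.card
  · -- |D| = 1
    obtain ⟨i0, hi0⟩ := Finset.card_eq_one.mp hc
    have hi0mem : i0 ∈ D := hi0 ▸ Finset.mem_singleton_self i0
    rw [hDdef, Finset.mem_filter, Finset.mem_range] at hi0mem
    obtain ⟨hi0m, hi0uv⟩ := hi0mem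
    have hsub : subBallL u ∩ subBallL v ⊆ {u, v} := by
      intro z hz
      obtain ⟨hzl, hzu, hzv⟩ := hzmem z hz
      by_cases hcase : z.getD i0 false = u.getD i0 false
      · left
        refine getD_ext u z hzl ?_
        intro k hk
        by_cases hkD : k ∈ D
        · rw [hi0, Finset.mem_singleton] at hkD
          rw [hkD]; exact hcase
        · exact hoff z hz k hk hkD
      · right
        have hzlv : z.length = v.length := by rw [hzl, hl]
        refine getD_ext v z hzlv ?_
        intro k hk
        rw [hl] at hk
        by_cases hkD : k ∈ D
        · rw [hi0, Finset.mem_singleton] at hkD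
          subst hkD
          exact hbool _ _ _ hcase (Ne.symm hi0uv)
        · rw [hoff z hz k hk hkD]
          by_contra h
          exact hkD (by simp only [hDdef, Finset.mem_filter, Finset.mem_range]
                        exact ⟨hk, fun hh => h hh⟩)
      -- done
    calc Set.ncard (subBallL u ∩ subBallL v) ≤ Set.ncard {u, v} :=
          Set.ncard_le_ncard hsub ((Set.finite_singleton _).insert _)
      _ ≤ 2 := le_trans (Set.ncard_insert_le _ _) (by simp)
  · -- |D| = 2
    obtain ⟨i, j, hij, hDij⟩ := Finset.card_eq_two.mp hc
    have him : i < m ∧ u.getD i false ≠ v.getD i false := by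
      have hmem : i ∈ D := by rw [hDij]; simp
      rw [hDdef, Finset.mem_filter, Finset.mem_range] at hmem
      exact hmem
    have hjm : j < m ∧ u.getD j false ≠ v.getD j false := by
      have hmem : j ∈ D := by rw [hDij]; simp
      rw [hDdef, Finset.mem_filter, Finset.mem_range] at hmem
      exact hmem
    set w1 := u.set i (v.getD i false) with hw1
    set w2 := u.set j (v.getD j false) with hw2
    have hsub : subBallL u ∩ subBallL v ⊆ {w1, w2} := by
      intro z hz
      obtain ⟨hzl, hzu, hzv⟩ := hzmem z hz
      -- agreement off D
      -- at i and j, z equals u's or v's value; not both u's, not both v's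
      have hbool2 : ∀ a b c : Bool, b ≠ c → a = b ∨ a = c := by decide
      have hiz := hbool2 (z.getD i false) (u.getD i false) (v.getD i false) him.2
      have hjz := hbool2 (z.getD j false) (u.getD j false) (v.getD j false) hjm.2
      have hnotbothu : ¬ (z.getD i false = u.getD i false ∧ z.getD j false = u.getD j false) := by
        rintro ⟨h1, h2⟩
        have hi' : i ∈ (Finset.range m).filter (fun k => v.getD k false ≠ z.getD k false) := by
          simp only [Finset.mem_filter, Finset.mem_range]
          exact ⟨him.1, fun hh => him.2 (h1 ▸ hh.symm ▸ rfl)⟩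
        have hj' : j ∈ (Finset.range m).filter (fun k => v.getD k false ≠ z.getD k false) := by
          simp only [Finset.mem_filter, Finset.mem_range]
          exact ⟨hjm.1, fun hh => hjm.2 (h2 ▸ hh.symm ▸ rfl)⟩
        exact hij (Finset.card_le_one.mp hzv i hi' j hj')
      have hnotbothv : ¬ (z.getD i false ≠ u.getD i false ∧ z.getD j false ≠ u.getD j false) := by
        rintro ⟨h1, h2⟩
        have hi' : i ∈ (Finset.range m).filter (fun k => u.getD k false ≠ z.getD k false) := by
          simp only [Finset.mem_filter, Finset.mem_range]
          exact ⟨him.1, fun hh => h1 hh.symm⟩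
        have hj' : j ∈ (Finset.range m).filter (fun k => u.getD k false ≠ z.getD k false) := by
          simp only [Finset.mem_filter, Finset.mem_range]
          exact ⟨hjm.1, fun hh => h2 hh.symm⟩
        exact hij (Finset.card_le_one.mp hzu i hi' j hj')
      have hgetw : ∀ (p : ℕ) (b : Bool) (k : ℕ), k < m →
          (u.set p b).getD k false = if p = k then b else u.getD k false := by
        intro p b k hk
        have hk' : k < (u.set p b).length := by simpa using hk
        rw [List.getD_eq_getElem _ _ hk', List.getElem_set]
        split
        · rfl
        · exact (List.getD_eq_getElem _ _ hk).symm
      by_cases hcase : z.getD i false = u.getD i false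
      · -- then z differs from u at j (else z = u, but then both-u), so z = w2
        right
        have hjzv : z.getD j false = v.getD j false := by
          rcases hjz with h | h
          · exact absurd ⟨hcase, h⟩ hnotbothu
          · exact h
        have hw2l : z.length = w2.length := by simpa [hw2] using hzl
        refine Set.mem_singleton_iff.mpr (getD_ext w2 z hw2l ?_)
        intro k hk
        have hkm : k < m := by simpa [hw2] using hk
        rw [hgetw j _ k hkm]
        split
        · next h => rw [← h]; exact hjzv
        · next h =>
          by_cases hkD : k ∈ D
          · rw [hDij] at hkD
            simp only [Finset.mem_insert, Finset.mem_singleton] at hkD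
            rcases hkD with rfl | rfl
            · exact hcase
            · exact absurd rfl h
          · exact hoff z hz k hkm hkD
      · -- z differs from u at i, so equals v there; z = w1
        left
        have hizv : z.getD i false = v.getD i false := by
          rcases hiz with h | h
          · exact absurd h hcase
          · exact h
        have hjzu : z.getD j false = u.getD j false := by
          by_contra h
          exact hnotbothv ⟨hcase, h⟩
        have hw1l : z.length = w1.length := by simpa [hw1] using hzl
        refine getD_ext w1 z hw1l ?_
        intro k hk
        have hkm : k < m := by simpa [hw1] using hk
        rw [hgetw i _ k hkm]
        split
        · next h => rw [← h]; exact hizv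
        · next h =>
          by_cases hkD : k ∈ D
          · rw [hDij] at hkD
            simp only [Finset.mem_insert, Finset.mem_singleton] at hkD
            rcases hkD with rfl | rfl
            · exact absurd rfl h
            · exact hjzu
          · exact hoff z hz k hkm hkD
    calc Set.ncard (subBallL u ∩ subBallL v) ≤ Set.ncard {w1, w2} :=
          Set.ncard_le_ncard hsub ((Set.finite_singleton _).insert _)
      _ ≤ 2 := le_trans (Set.ncard_insert_le _ _) (by simp)

/-- If the single-deletion balls of distinct `x, y` are disjoint, then for any deletion
positions `dx, dy` the substitution balls of the two deleted sequences intersect in at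
most 2 elements. -/
theorem stmt14 (n : ℕ) (x y : List Bool) (hx : x.length = n) (hy : y.length = n)
    (hne : x ≠ y) (hD : delBall x ∩ delBall y = ∅)
    (dx dy : ℕ) (hdx : dx < n) (hdy : dy < n) :
    Set.ncard (subBallL (x.eraseIdx dx) ∩ subBallL (y.eraseIdx dy)) ≤ 2 := by
  have hlx : (x.eraseIdx dx).length = n - 1 := by
    rw [List.length_eraseIdx, hx]; simp [hdx]
  have hly : (y.eraseIdx dy).length = n - 1 := by
    rw [List.length_eraseIdx, hy]; simp [hdy]
  apply key
  · rw [hlx, hly]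
  · intro h
    have hmem : x.eraseIdx dx ∈ delBall x ∩ delBall y := by
      constructor
      · exact ⟨dx, by rw [hx]; exact hdx, rfl⟩
      · exact ⟨dy, by rw [hy]; exact hdy, h⟩
    rw [hD] at hmem
    exact hmem
end

section
/- Let x, y ∈ {0,1}^n be distinct with d_H = d_H(x,y) ≥ 5, and suppose the single-deletion balls of x and y are disjoint. Then it cannot simultaneously hold that x_{[j_3+1, j_{d_H}]} = y_{[j_3, j_{d_H}-1]} and x_{[j_1+1, j_{d_H-2}]} = y_{[j_1, j_{d_H-2}-1]}, where j_1 < … < j_{d_H} are the disagreement positions of x and y. -/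
namespace List

variable {α : Type*}

theorem getElem_succ_eq_of_take_drop_eq {x y : List α} {a t k : ℕ}
    (h : (x.drop (a + 1)).take t = (y.drop a).take t) (hak : a ≤ k) (hkt : k < a + t)
    (hx : k + 1 < x.length) (hy : k < y.length) : x[k + 1] = y[k] := by
  have h' := congrArg (·[k - a]?) h
  simp only [getElem?_take, getElem?_drop, if_pos (show k - a < t by omega),
    show a + 1 + (k - a) = k + 1 by omega, show a + (k - a) = k by omega,
    getElem?_eq_getElem hx, getElem?_eq_getElem hy] at h'
  exact Option.some.inj h'

theorem eraseIdx_eq_eraseIdx_of_shift {x y : List α} (hlen : x.length = y.length)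
    {a b : ℕ} (hab : a ≤ b) (hb : b < y.length)
    (hlo : ∀ k (hx : k < x.length) (hy : k < y.length), k < a → x[k] = y[k])
    (hhi : ∀ k (hx : k < x.length) (hy : k < y.length), b < k → x[k] = y[k])
    (hshift : ∀ k (hx : k + 1 < x.length) (hy : k < y.length), a ≤ k → k < b →
      x[k + 1] = y[k]) :
    x.eraseIdx a = y.eraseIdx b := by
  refine ext_getElem (by simp only [length_eraseIdx]; split_ifs <;> omega) fun k hkx hky => ?_
  simp only [length_eraseIdx_of_lt hb] at hky
  rw [getElem_eraseIdx, getElem_eraseIdx]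
  by_cases hka : k < a
  · rw [dif_pos hka, dif_pos (by omega)]
    exact hlo k _ _ hka
  by_cases hkb : k < b
  · rw [dif_neg hka, dif_pos hkb]
    exact hshift k _ _ (by omega) hkb
  · rw [dif_neg hka, dif_neg hkb]
    exact hhi (k + 1) _ _ (by omega)

end List

theorem getElem_eq_of_notMem_filter_getD_ne {α : Type*} [DecidableEq α] {x y : List α}
    {z : α} {n k : ℕ} (hk : k ∉ (Finset.range n).filter (fun k => x.getD k z ≠ y.getD k z))
    (hkn : k < n) (hx : k < x.length) (hy : k < y.length) : x[k] = y[k] := by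
  simpa [hkn, List.getD_eq_getElem, hx, hy] using hk

theorem stmt15_general (n : ℕ) (x y : List Bool) (hx : x.length = n) (hy : y.length = n)
    (hD : delBall x ∩ delBall y = ∅)
    (d : ℕ)
    (hd : d = ((Finset.range n).filter
      (fun k => x.getD k false ≠ y.getD k false)).card)
    (hd5 : 5 ≤ d)
    (j : ℕ → ℕ)
    (hj : ∀ i, j i = (((Finset.range n).filter
      (fun k => x.getD k false ≠ y.getD k false)).sort (· ≤ ·)).getD (i - 1) 0) :
    ¬ ((x.drop (j 3 + 1)).take (j d - j 3) = (y.drop (j 3)).take (j d - j 3) ∧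
       (x.drop (j 1 + 1)).take (j (d - 2) - j 1) =
         (y.drop (j 1)).take (j (d - 2) - j 1)) := by
  rintro ⟨hhi, hlo⟩
  set S := (Finset.range n).filter (fun k => x.getD k false ≠ y.getD k false)
  have hS : S.Nonempty := Finset.card_pos.mp (by omega)
  have hlen : (S.sort (· ≤ ·)).length = d := by simp [hd]
  have hjL : ∀ i (h₁ : 1 ≤ i) (h₂ : i ≤ d), j i = (S.sort (· ≤ ·))[i - 1] := fun i _ _ => by
    rw [hj, List.getD_eq_getElem]
  have hj1 : j 1 = S.min' hS := by rw [hjL 1 le_rfl (by omega), Finset.min'_eq_sorted_zero]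
  have hjd : j d = S.max' hS := by
    rw [hjL d (by omega) le_rfl, Finset.max'_eq_sorted_last]
    simp only [hlen]
  have hj3 : j 3 ≤ j (d - 2) := by
    rw [hjL 3 (by omega) (by omega), hjL (d - 2) (by omega) (by omega)]
    exact (Finset.sortedLT_sort S).getElem_le_getElem_iff.mpr (by omega)
  have hjdn : j d < n := by
    exact Finset.mem_range.mp (Finset.mem_filter.mp (hjd ▸ S.max'_mem hS)).1
  have hj1d : j 1 ≤ j d := hj1 ▸ hjd ▸ S.min'_le_max' hS
  have hdel : x.eraseIdx (j 1) = y.eraseIdx (j d) := by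
    refine List.eraseIdx_eq_eraseIdx_of_shift (by omega) hj1d (by omega)
      (fun k hkx hky hk => ?_) (fun k hkx hky hk => ?_) (fun k hkx hky hk₁ hk₂ => ?_)
    · exact getElem_eq_of_notMem_filter_getD_ne
        (fun hkS => (S.min'_le k hkS).not_gt (hj1 ▸ hk)) (by omega) hkx hky
    · exact getElem_eq_of_notMem_filter_getD_ne
        (fun hkS => (S.le_max' k hkS).not_gt (hjd ▸ hk)) (by omega) hkx hky
    · by_cases hk : k < j (d - 2)
      · exact List.getElem_succ_eq_of_take_drop_eq hlo hk₁ (by omega) hkx hky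
      · exact List.getElem_succ_eq_of_take_drop_eq hhi (by omega) (by omega) hkx hky
  exact (Set.eq_empty_iff_forall_notMem.mp hD) _ ⟨⟨j 1, by omega, rfl⟩, ⟨j d, by omega, hdel⟩⟩

/-- For distinct `x, y` of length `n` with disjoint single-deletion balls and Hamming
distance `d ≥ 5`, letting `j i` be the `i`-th smallest (0-indexed) disagreement
position, the equalities `x_{[j₃+1, j_d]} = y_{[j₃, j_d−1]}` and
`x_{[j₁+1, j_{d−2}]} = y_{[j₁, j_{d−2}−1]}` cannot hold simultaneously. -/
theorem stmt15 (n : ℕ) (x y : List Bool) (hx : x.length = n) (hy : y.length = n)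
    (hne : x ≠ y) (hD : delBall x ∩ delBall y = ∅)
    (d : ℕ)
    (hd : d = ((Finset.range n).filter
      (fun k => x.getD k false ≠ y.getD k false)).card)
    (hd5 : 5 ≤ d)
    (j : ℕ → ℕ)
    (hj : ∀ i, j i = (((Finset.range n).filter
      (fun k => x.getD k false ≠ y.getD k false)).sort (· ≤ ·)).getD (i - 1) 0) :
    ¬ ((x.drop (j 3 + 1)).take (j d - j 3) = (y.drop (j 3)).take (j d - j 3) ∧
       (x.drop (j 1 + 1)).take (j (d - 2) - j 1) =
         (y.drop (j 1)).take (j (d - 2) - j 1)) :=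
  stmt15_general n x y hx hy hD d hd hd5 j hj
end
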